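/- As u → 0⁻ (u < 0), the lower branch of the Lambert W function satisfies W₋₁(u) = log(-u) - log(-log(-u)) + o(1). -/
import Mathlib

open Real Set Filter

/-- `log t ≤ t / 2` for `t > 0`. -/
lemma log_le_half (t : ℝ) (ht : 0 < t) : Real.log t ≤ t / 2 := by
  have h1 : Real.log (Real.sqrt t) ≤ Real.sqrt t - 1 :=
    Real.log_le_sub_one_of_pos (Real.sqrt_pos.2 ht)
  have h2 : Real.log (Real.sqrt t) = Real.log t / 2 := Real.log_sqrt ht.le
  have h3 : Real.sqrt t ^ 2 = t := Real.sq_sqrt ht.le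
  nlinarith [Real.sqrt_nonneg t, sq_nonneg (Real.sqrt t - 2)]

lemma log_two_mul_div_tendsto :
    Tendsto (fun x : ℝ => Real.log (2 * x) / x) atTop (nhds 0) := by
  have h1 : Tendsto (fun x : ℝ => Real.log 2 / x) atTop (nhds 0) :=
    tendsto_const_nhds.div_atTop tendsto_id
  have h2 : Tendsto (fun x : ℝ => Real.log x / x) atTop (nhds 0) := by
    have := Real.tendsto_pow_log_div_mul_add_atTop 1 0 1 one_ne_zero
    simpa using this
  have := h1.add h2
  rw [add_zero] at this
  refine this.congr' ?_
  filter_upwards [eventually_gt_atTop (0 : ℝ)] with x hx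
  rw [Real.log_mul two_ne_zero hx.ne', add_div]

/-- Pointwise estimates for the Lambert W lower branch. -/
lemma lambert_pointwise (u w : ℝ) (hu : u < 0) (hwe : w * Real.exp w = u)
    (hw1 : w ≤ -1) (hL1 : 1 < -Real.log (-u)) :
    w = Real.log (-u) - Real.log (-w) ∧
    0 ≤ Real.log (-w) - Real.log (-Real.log (-u)) ∧
    Real.log (-w) - Real.log (-Real.log (-u)) ≤
      Real.log (2 * (-Real.log (-u))) / (-Real.log (-u)) := by
  set L := -Real.log (-u) with hLdef
  have hLpos : 0 < L := lt_trans one_pos hL1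
  have hwneg : 0 < -w := by linarith
  -- identity
  have hid : Real.log (-u) = Real.log (-w) + w := by
    have : -u = (-w) * Real.exp w := by linarith [hwe]
    rw [this, Real.log_mul hwneg.ne' (Real.exp_pos w).ne', Real.log_exp]
  have hkey : -w = L + Real.log (-w) := by
    simp only [hLdef]; linarith [hid]
  have hlogw_nonneg : 0 ≤ Real.log (-w) := Real.log_nonneg (by linarith)
  have hwge : L ≤ -w := by linarith [hkey]
  have hwle : -w ≤ 2 * L := by
    have := log_le_half (-w) hwneg
    linarith [hkey]
  refine ⟨by linarith [hid], ?_, ?_⟩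
  · have := Real.log_le_log hLpos hwge
    linarith
  · have h1 : Real.log (-w) - Real.log L = Real.log ((-w) / L) := by
      rw [Real.log_div hwneg.ne' hLpos.ne']
    have h2 : Real.log ((-w) / L) ≤ (-w) / L - 1 :=
      Real.log_le_sub_one_of_pos (div_pos hwneg hLpos)
    have h3 : (-w) / L - 1 = Real.log (-w) / L := by
      have hlw : Real.log (-w) = -w - L := by linarith [hkey]
      rw [hlw, sub_div, div_self hLpos.ne']
    have h4 : Real.log (-w) / L ≤ Real.log (2 * L) / L := by
      gcongr
    linarith [h1, h2, h3, h4]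

/-- As `u → 0⁻`, the lower branch of the Lambert W function satisfies
`W₋₁(u) = log(-u) - log(-log(-u)) + o(1)`. -/
theorem stmt3 (W : ℝ → ℝ)
    (hW : ∀ u ∈ Set.Ico (-Real.exp (-1)) 0, W u * Real.exp (W u) = u ∧ W u ≤ -1) :
    Filter.Tendsto (fun u : ℝ => W u - (Real.log (-u) - Real.log (-Real.log (-u))))
      (nhdsWithin 0 (Set.Iio 0)) (nhds 0) := by
  have hL : Tendsto (fun u : ℝ => -Real.log (-u)) (nhdsWithin 0 (Set.Iio 0)) atTop := by
    have hneg : Tendsto (fun u : ℝ => -u) (nhdsWithin 0 (Set.Iio 0)) (nhdsWithin 0 (Set.Ioi 0)) := by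
      apply tendsto_nhdsWithin_of_tendsto_nhds_of_eventually_within
      · simpa using (continuous_neg.tendsto (0:ℝ)).mono_left nhdsWithin_le_nhds
      · filter_upwards [self_mem_nhdsWithin] with u hu
        exact Set.mem_Ioi.2 (neg_pos.2 (Set.mem_Iio.1 hu))
    exact tendsto_neg_atBot_atTop.comp (Real.tendsto_log_nhdsGT_zero.comp hneg)
  have hbound : Tendsto (fun u : ℝ => Real.log (2 * (-Real.log (-u))) / (-Real.log (-u)))
      (nhdsWithin 0 (Set.Iio 0)) (nhds 0) := log_two_mul_div_tendsto.comp hL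
  -- eventual facts
  have hmem : ∀ᶠ u in nhdsWithin (0:ℝ) (Set.Iio 0), -Real.exp (-1) < u :=
    (eventually_gt_nhds (by linarith [Real.exp_pos (-1)] : -Real.exp (-1) < 0)).filter_mono nhdsWithin_le_nhds
  have hu0 : ∀ᶠ u in nhdsWithin (0:ℝ) (Set.Iio 0), u < 0 := by
    filter_upwards [self_mem_nhdsWithin] with u hu using Set.mem_Iio.1 hu
  have hL1 : ∀ᶠ u in nhdsWithin (0:ℝ) (Set.Iio 0), 1 < -Real.log (-u) :=
    hL.eventually (eventually_gt_atTop 1)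
  have hfacts : ∀ᶠ u in nhdsWithin (0:ℝ) (Set.Iio 0),
      W u = Real.log (-u) - Real.log (-W u) ∧
      0 ≤ Real.log (-W u) - Real.log (-Real.log (-u)) ∧
      Real.log (-W u) - Real.log (-Real.log (-u)) ≤
        Real.log (2 * (-Real.log (-u))) / (-Real.log (-u)) := by
    filter_upwards [hmem, hu0, hL1] with u h1 h2 h3
    obtain ⟨hwe, hw1⟩ := hW u ⟨h1.le, h2⟩
    exact lambert_pointwise u (W u) h2 hwe hw1 h3
  have key : Tendsto (fun u : ℝ => Real.log (-W u) - Real.log (-Real.log (-u)))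
      (nhdsWithin 0 (Set.Iio 0)) (nhds 0) := by
    apply tendsto_of_tendsto_of_tendsto_of_le_of_le' tendsto_const_nhds hbound
    · filter_upwards [hfacts] with u h using h.2.1
    · filter_upwards [hfacts] with u h using h.2.2
  have heq : (fun u : ℝ => W u - (Real.log (-u) - Real.log (-Real.log (-u))))
      =ᶠ[nhdsWithin 0 (Set.Iio 0)] fun u => -(Real.log (-W u) - Real.log (-Real.log (-u))) := by
    filter_upwards [hfacts] with u h
    linear_combination h.1
  rw [Filter.tendsto_congr' heq]
  simpa using key.neg
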